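/- arXiv:2007.08900 — 2 statements merged into one kernel-verified Lean document; each statement's English description precedes it below -/
import Mathlib

section
/- For all indices i, k, l, j with 0 ≤ i ≤ k < l ≤ j ≤ n−1 and every s with k ≤ s ≤ l, one has dOrth(s,k,l) ≤ dOrth(s,i,j) + max (dOrth(k,i,j)) (dOrth(l,i,j)). (Pointwise triangle-inequality step in the proof of Lemma 5: d(p_s, r_s) ≤ d(p_s, q_s) + d(q_s, r_s) ≤ 2ε.) -/
/-!
Both `q(·,k,l)` and `q(·,i,j)` are affine functions of the projection value `t`, so with
`μ = λ(s,k,l) ∈ [0,1]` the difference `q(s,i,j) - q(s,k,l)` is the convex combination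
`(1 - μ) (q(k,i,j) - p k) + μ (q(l,i,j) - p l)`, of norm at most `max (dOrth k i j) (dOrth l i j)`.
The triangle inequality through `q(s,i,j)` then gives the bound.
-/

/-- The projection value `t s = ⟪p s, u⟫` of the cloud point `p s` onto the direction `u`. -/
noncomputable def projVal {d n : ℕ} (p : Fin n → EuclideanSpace ℝ (Fin d))
    (u : EuclideanSpace ℝ (Fin d)) (s : Fin n) : ℝ :=
  inner ℝ (p s) u

/-- The point `q(s,i,j)` of the straight segment `[p i, p j]` whose projection
onto `u` equals `t s`. -/
noncomputable def segPoint {d n : ℕ} (p : Fin n → EuclideanSpace ℝ (Fin d))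
    (u : EuclideanSpace ℝ (Fin d)) (s i j : Fin n) : EuclideanSpace ℝ (Fin d) :=
  p i + ((projVal p u s - projVal p u i) / (projVal p u j - projVal p u i)) • (p j - p i)

/-- The orthogonal distance `dOrth(s,i,j)` from `p s` to the segment `[p i, p j]`,
measured orthogonally to `u`. -/
noncomputable def dOrth {d n : ℕ} (p : Fin n → EuclideanSpace ℝ (Fin d))
    (u : EuclideanSpace ℝ (Fin d)) (s i j : Fin n) : ℝ :=
  dist (p s) (segPoint p u s i j)

open AffineMap Set

theorem dist_lineMap_lineMap_le_max {V P : Type*} [NormedAddCommGroup V] [NormedSpace ℝ V]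
    [MetricSpace P] [NormedAddTorsor V P] (a b a' b' : P) {c : ℝ} (hc : c ∈ Icc 0 1) :
    dist (lineMap a b c) (lineMap a' b' c) ≤ max (dist a a') (dist b b') := by
  rw [dist_eq_norm_vsub V, lineMap_vsub_lineMap, ← dist_zero_right, ← Metric.mem_closedBall]
  refine (convex_closedBall _ _).lineMap_mem ?_ ?_ hc <;>
    simp [Metric.mem_closedBall, dist_eq_norm_vsub V]

theorem sub_div_eq_lineMap {K : Type*} [Field K] {a b : K} (hab : a ≠ b) (x c D : K) :
    (x - c) / D = lineMap ((a - c) / D) ((b - c) / D) ((x - a) / (b - a)) := by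
  have hx : (x - a) / (b - a) * (b - a) = x - a := div_mul_cancel₀ _ (sub_ne_zero.2 hab.symm)
  rw [lineMap_apply_module', smul_eq_mul]
  linear_combination -D⁻¹ * hx

theorem sub_div_sub_mem_Icc {a b x : ℝ} (hab : a < b) (hx : x ∈ Icc a b) :
    (x - a) / (b - a) ∈ Icc 0 1 :=
  ⟨div_nonneg (sub_nonneg.2 hx.1) (sub_pos.2 hab).le,
    (div_le_one (sub_pos.2 hab)).2 (sub_le_sub_right hx.2 a)⟩

section Cloud

variable {d n : ℕ} (p : Fin n → EuclideanSpace ℝ (Fin d)) (u : EuclideanSpace ℝ (Fin d))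

/-- The parameter `λ(s,i,j)` of `segPoint p u s i j` along the segment `[p i, p j]`. -/
noncomputable def segRatio (s i j : Fin n) : ℝ :=
  (projVal p u s - projVal p u i) / (projVal p u j - projVal p u i)

theorem segPoint_eq_lineMap (s i j : Fin n) :
    segPoint p u s i j = lineMap (p i) (p j) (segRatio p u s i j) := by
  rw [segPoint, lineMap_apply_module', add_comm, segRatio]

theorem segPoint_eq_lineMap_segPoint {s i j k l : Fin n} (hkl : projVal p u k ≠ projVal p u l) :
    segPoint p u s i j =
      lineMap (segPoint p u k i j) (segPoint p u l i j) (segRatio p u s k l) := by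
  simp only [segPoint_eq_lineMap p u _ i j, ← apply_lineMap]
  exact congrArg _ (sub_div_eq_lineMap hkl _ _ _)

theorem segRatio_mem_Icc (hmono : StrictMono (projVal p u)) {s k l : Fin n} (hkl : k < l)
    (hks : k ≤ s) (hsl : s ≤ l) : segRatio p u s k l ∈ Icc 0 1 :=
  sub_div_sub_mem_Icc (hmono hkl) ⟨hmono.monotone hks, hmono.monotone hsl⟩

end Cloud

theorem pointwise_triangle_step_general {d n : ℕ}
    (p : Fin n → EuclideanSpace ℝ (Fin d)) (u : EuclideanSpace ℝ (Fin d))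
    (hmono : StrictMono (projVal p u))
    (i k l j : Fin n) (hkl : k < l)
    (s : Fin n) (hks : k ≤ s) (hsl : s ≤ l) :
    dOrth p u s k l ≤ dOrth p u s i j + max (dOrth p u k i j) (dOrth p u l i j) := by
  have hq : dist (segPoint p u s i j) (segPoint p u s k l) ≤
      max (dOrth p u k i j) (dOrth p u l i j) := by
    rw [segPoint_eq_lineMap_segPoint p u (hmono hkl).ne, segPoint_eq_lineMap p u s k l,
      dOrth, dOrth, dist_comm (p k), dist_comm (p l)]
    exact dist_lineMap_lineMap_le_max _ _ _ _ (segRatio_mem_Icc p u hmono hkl hks hsl)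
  calc dOrth p u s k l
      ≤ dist (p s) (segPoint p u s i j) + dist (segPoint p u s i j) (segPoint p u s k l) :=
        dist_triangle _ _ _
    _ ≤ dOrth p u s i j + max (dOrth p u k i j) (dOrth p u l i j) := add_le_add_right hq _

/-- Pointwise triangle-inequality step in the proof of Lemma 5:
`d(p_s, r_s) ≤ d(p_s, q_s) + d(q_s, r_s) ≤ 2ε`. -/
theorem pointwise_triangle_step {d n : ℕ} (hd : 1 ≤ d) (hn : 2 ≤ n)
    (p : Fin n → EuclideanSpace ℝ (Fin d)) (u : EuclideanSpace ℝ (Fin d))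
    (hu : ‖u‖ = 1) (hmono : StrictMono (projVal p u))
    (i k l j : Fin n) (hik : i ≤ k) (hkl : k < l) (hlj : l ≤ j)
    (s : Fin n) (hks : k ≤ s) (hsl : s ≤ l) :
    dOrth p u s k l ≤ dOrth p u s i j + max (dOrth p u k i j) (dOrth p u l i j) :=
  pointwise_triangle_step_general p u hmono i k l j hkl s hks hsl
end

section
/- Let ε ≥ 0, let 0 = a_1 < … < a_m = n−1 be a 2ε-greedy sequence, and let 0 = b_1 < … < b_k = n−1 be any ε-feasible sequence. Then b_i ≤ a_i for every index i ≤ min(m, k). (Key inductive claim in the proof of Theorem 1: the greedy sequence at error 2ε always stays at least as far ahead as any optimal sequence at error ε.) -/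
/-- The orthogonal distance `D(i,j)` from the segment `[p i, p j]` to the cloud:
the maximum of `dOrth(s,i,j)` over `i ≤ s ≤ j` (endpoints contribute `0`). -/
noncomputable def segCloudDist {d n : ℕ} (p : Fin n → EuclideanSpace ℝ (Fin d))
    (u : EuclideanSpace ℝ (Fin d)) (i j : Fin n) : ℝ :=
  (insert (0 : ℝ) ((Finset.Icc i j).image fun s => dOrth p u s i j)).max'
    (Finset.insert_nonempty _ _)

/-- An `ε`-greedy sequence `0 = a_1 < … < a_m = n-1` (here with `m + 1` vertices
`a 0, …, a (Fin.last m)`): (a) for every step and every `k` with `a_{i-1} < k ≤ a_i`,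
`D(a_{i-1}, k) ≤ ε`; (b) for every step with `a_i < n - 1`, `D(a_{i-1}, a_i + 1) > ε`. -/
def IsGreedySeq {d n : ℕ} (p : Fin n → EuclideanSpace ℝ (Fin d))
    (u : EuclideanSpace ℝ (Fin d)) (ε : ℝ) {m : ℕ} (a : Fin (m + 1) → Fin n) : Prop :=
  StrictMono a ∧ (a 0 : ℕ) = 0 ∧ (a (Fin.last m) : ℕ) = n - 1 ∧
  (∀ i : Fin m, ∀ k : Fin n, a i.castSucc < k → k ≤ a i.succ →
    segCloudDist p u (a i.castSucc) k ≤ ε) ∧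
  (∀ i : Fin m, ∀ h : (a i.succ : ℕ) + 1 < n,
    ε < segCloudDist p u (a i.castSucc) ⟨(a i.succ : ℕ) + 1, h⟩)

/-- An `ε`-feasible sequence `0 = b_1 < … < b_k = n-1` (here with `k + 1` vertices):
`D(b_{i-1}, b_i) ≤ ε` for every step. -/
def IsFeasibleSeq {d n : ℕ} (p : Fin n → EuclideanSpace ℝ (Fin d))
    (u : EuclideanSpace ℝ (Fin d)) (ε : ℝ) {k : ℕ} (b : Fin (k + 1) → Fin n) : Prop :=
  StrictMono b ∧ (b 0 : ℕ) = 0 ∧ (b (Fin.last k) : ℕ) = n - 1 ∧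
  ∀ i : Fin k, segCloudDist p u (b i.castSucc) (b i.succ) ≤ ε

/-!
The segment points `q(s, B, C)` depend affinely on the projection value `t s`. Hence for a
sub-segment `[p i, p j]` of a window `B ≤ i < j ≤ C`, the difference `q(s, B, C) - q(s, i, j)`
is a convex combination of `q(i, B, C) - p i` and `q(j, B, C) - p j`, and the triangle
inequality gives `D(i, j) ≤ 2 D(B, C)`. So if a feasible step `[b_i, b_{i+1}]` at error `ε`
overtook the greedy step from `a_i ≥ b_i`, the segment `[a_i, a_{i+1} + 1]` would have error
at most `2ε`, and the greedy rule would not have stopped at `a_{i+1}`.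
-/

section SegmentGeometry

variable {d n : ℕ} (p : Fin n → EuclideanSpace ℝ (Fin d)) (u : EuclideanSpace ℝ (Fin d))

/-- The parameter `λ(s, i, j)` of `segPoint p u s i j` on the segment `[p i, p j]`. -/
noncomputable def segCoeff (s i j : Fin n) : ℝ :=
  (projVal p u s - projVal p u i) / (projVal p u j - projVal p u i)

lemma segPoint_eq_combo (s i j : Fin n) :
    segPoint p u s i j = (1 - segCoeff p u s i j) • p i + segCoeff p u s i j • p j := by
  rw [segPoint, ← segCoeff]
  module

lemma projVal_eq_segCoeff_combo {s i j : Fin n} (hij : projVal p u i ≠ projVal p u j) :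
    projVal p u s =
      (1 - segCoeff p u s i j) * projVal p u i + segCoeff p u s i j * projVal p u j := by
  have hden : projVal p u j - projVal p u i ≠ 0 := sub_ne_zero.2 hij.symm
  rw [segCoeff]
  field_simp
  ring

lemma segCoeff_mem_Icc (hmono : StrictMono (projVal p u)) {s i j : Fin n} (hij : i < j)
    (hs : s ∈ Set.Icc i j) : segCoeff p u s i j ∈ Set.Icc 0 1 := by
  have hden : 0 < projVal p u j - projVal p u i := sub_pos.2 (hmono hij)
  have hsi := hmono.monotone hs.1
  have hsj := hmono.monotone hs.2
  exact ⟨div_nonneg (by linarith) hden.le, (div_le_one hden).2 (by linarith)⟩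

/-- No condition on `B, C` is needed: when `t B = t C`, division by zero sends every
`segPoint p u s B C` to `p B`. -/
lemma segPoint_eq_combo_of_projVal_eq {s i j B C : Fin n} {l : ℝ}
    (h : projVal p u s = (1 - l) * projVal p u i + l * projVal p u j) :
    segPoint p u s B C = (1 - l) • segPoint p u i B C + l • segPoint p u j B C := by
  simp only [segPoint, div_eq_mul_inv, h]
  module

lemma dOrth_le_dOrth_add_max (hmono : StrictMono (projVal p u)) {s i j : Fin n}
    (hij : i < j) (hs : s ∈ Set.Icc i j) (B C : Fin n) :
    dOrth p u s i j ≤ dOrth p u s B C + max (dOrth p u i B C) (dOrth p u j B C) := by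
  obtain ⟨hl0, hl1⟩ := segCoeff_mem_Icc p u hmono hij hs
  have hdiff : segPoint p u s B C - segPoint p u s i j =
      (1 - segCoeff p u s i j) • (segPoint p u i B C - p i) +
        segCoeff p u s i j • (segPoint p u j B C - p j) := by
    rw [segPoint_eq_combo_of_projVal_eq p u
      (projVal_eq_segCoeff_combo p u (hmono hij).ne), segPoint_eq_combo p u s i j]
    module
  have hend : ∀ x, ‖segPoint p u x B C - p x‖ = dOrth p u x B C := fun x => by
    rw [dOrth, dist_eq_norm, norm_sub_rev]
  have hmax_left := le_max_left (dOrth p u i B C) (dOrth p u j B C)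
  have hmax_right := le_max_right (dOrth p u i B C) (dOrth p u j B C)
  calc dOrth p u s i j
      ≤ dOrth p u s B C + ‖segPoint p u s B C - segPoint p u s i j‖ := by
        rw [← dist_eq_norm]; exact dist_triangle _ _ _
    _ ≤ dOrth p u s B C +
          ((1 - segCoeff p u s i j) * dOrth p u i B C + segCoeff p u s i j * dOrth p u j B C) := by
        rw [hdiff, ← hend i, ← hend j]
        gcongr
        refine (norm_add_le _ _).trans_eq ?_
        rw [norm_smul, norm_smul, Real.norm_of_nonneg (by linarith), Real.norm_of_nonneg hl0]
    _ ≤ dOrth p u s B C + max (dOrth p u i B C) (dOrth p u j B C) := by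
        nlinarith

lemma segCloudDist_nonneg (i j : Fin n) : 0 ≤ segCloudDist p u i j :=
  Finset.le_max' _ _ (Finset.mem_insert_self _ _)

lemma dOrth_le_segCloudDist {s i j : Fin n} (hs : s ∈ Set.Icc i j) :
    dOrth p u s i j ≤ segCloudDist p u i j :=
  Finset.le_max' _ _ <| Finset.mem_insert_of_mem <|
    Finset.mem_image_of_mem (fun x => dOrth p u x i j) (Finset.mem_Icc.2 hs)

lemma segCloudDist_le_two_mul_of_subsegment (hmono : StrictMono (projVal p u))
    {B C i j : Fin n} (hBi : B ≤ i) (hij : i < j) (hjC : j ≤ C) :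
    segCloudDist p u i j ≤ 2 * segCloudDist p u B C := by
  have hwindow : ∀ x ∈ Set.Icc i j, dOrth p u x B C ≤ segCloudDist p u B C := fun x hx =>
    dOrth_le_segCloudDist p u ⟨hBi.trans hx.1, hx.2.trans hjC⟩
  refine Finset.max'_le _ _ _ fun y hy => ?_
  rcases Finset.mem_insert.1 hy with rfl | hy
  · linarith [segCloudDist_nonneg p u B C]
  · obtain ⟨s, hs, rfl⟩ := Finset.mem_image.1 hy
    have hs : s ∈ Set.Icc i j := Finset.mem_Icc.1 hs
    have := dOrth_le_dOrth_add_max p u hmono hij hs B C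
    have := max_le (hwindow i ⟨le_rfl, hij.le⟩) (hwindow j ⟨hij.le, le_rfl⟩)
    linarith [hwindow s hs]

end SegmentGeometry

lemma IsGreedySeq.le_succ_of_segCloudDist_le {d n : ℕ} {p : Fin n → EuclideanSpace ℝ (Fin d)}
    {u : EuclideanSpace ℝ (Fin d)} (hmono : StrictMono (projVal p u)) {ε : ℝ} {m : ℕ}
    {a : Fin (m + 1) → Fin n} (ha : IsGreedySeq p u (2 * ε) a) (I : Fin m) {B C : Fin n}
    (hB : B ≤ a I.castSucc) (hBC : segCloudDist p u B C ≤ ε) :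
    C ≤ a I.succ := by
  by_contra! hC
  rw [Fin.lt_def] at hC
  have hnext : (a I.succ : ℕ) + 1 < n := by omega
  have hstep : (a I.castSucc : ℕ) < a I.succ := ha.1 Fin.castSucc_lt_succ
  have hsub := segCloudDist_le_two_mul_of_subsegment p u hmono (j := ⟨_, hnext⟩) (C := C) hB
    (Fin.lt_def.2 (by dsimp only; omega)) (Fin.le_def.2 (by dsimp only; omega))
  linarith [ha.2.2.2.2 I hnext]

theorem greedy_stays_ahead_general {d n : ℕ}
    (p : Fin n → EuclideanSpace ℝ (Fin d)) (u : EuclideanSpace ℝ (Fin d))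
    (hmono : StrictMono (projVal p u))
    (ε : ℝ) {m k : ℕ}
    (a : Fin (m + 1) → Fin n) (b : Fin (k + 1) → Fin n)
    (ha : IsGreedySeq p u (2 * ε) a) (hb : IsFeasibleSeq p u ε b)
    (i : ℕ) (him : i < m + 1) (hik : i < k + 1) :
    b ⟨i, hik⟩ ≤ a ⟨i, him⟩ := by
  induction i with
  | zero => exact Fin.le_def.2 (show (b 0 : ℕ) ≤ a 0 by rw [ha.2.1, hb.2.1])
  | succ i ih =>
    exact ha.le_succ_of_segCloudDist_le hmono ⟨i, by omega⟩ (ih (by omega) (by omega))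
      (hb.2.2.2 ⟨i, by omega⟩)

/-- Key inductive claim in the proof of Theorem 1: the greedy sequence at error
`2ε` always stays at least as far ahead as any feasible sequence at error `ε`. -/
theorem greedy_stays_ahead {d n : ℕ} (hd : 1 ≤ d) (hn : 2 ≤ n)
    (p : Fin n → EuclideanSpace ℝ (Fin d)) (u : EuclideanSpace ℝ (Fin d))
    (hu : ‖u‖ = 1) (hmono : StrictMono (projVal p u))
    (ε : ℝ) (hε : 0 ≤ ε) {m k : ℕ}
    (a : Fin (m + 1) → Fin n) (b : Fin (k + 1) → Fin n)
    (ha : IsGreedySeq p u (2 * ε) a) (hb : IsFeasibleSeq p u ε b)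
    (i : ℕ) (him : i < m + 1) (hik : i < k + 1) :
    b ⟨i, hik⟩ ≤ a ⟨i, him⟩ :=
  greedy_stays_ahead_general p u hmono ε a b ha hb i him hik
end
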